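/- For the GRLOWJFA over {a,b} with states q0,q1, start q0, accepting state q1, and rules (q0,a,q0),(q0,bb,q1), the accepted language is { a^n b b : n ≥ 0 } ∪ { a^l b a^m b a^n : l,n ≥ 0, m ≥ 1 }. -/
import Mathlib


open List

/-- Two-letter alphabet. -/
inductive AB : Type | a | b
  deriving DecidableEq, Repr

/-- Three-letter alphabet. -/
inductive ABC : Type | a | b | c
  deriving DecidableEq, Repr

instance : Fintype AB := ⟨⟨{AB.a, AB.b}, by decide⟩, by intro x; cases x <;> decide⟩
instance : Fintype ABC := ⟨⟨{ABC.a, ABC.b, ABC.c}, by decide⟩, by intro x; cases x <;> decide⟩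

/-- The Dyck language over the two designated letters `a` (open) and `b` (close):
balanced words using only `a` and `b`. -/
def Dyck {α : Type} [DecidableEq α] (a b : α) : Set (List α) :=
  {w | (∀ x ∈ w, x = a ∨ x = b) ∧ w.count a = w.count b ∧
       ∀ u, u <+: w → u.count b ≤ u.count a}

/-- `u` contains no word from `S` as a subword (infix). -/
def NoSub {α : Type} (S : Set (List α)) (u : List α) : Prop :=
  ¬ ∃ w ∈ S, w <:+: u

/-! ### Right one-way jumping finite automata -/

structure ROWJFA (α σ : Type) where
  start : σ
  accept : Set σ
  rules : Set (σ × α × σ)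
  det : ∀ p a q q', (p, a, q) ∈ rules → (p, a, q') ∈ rules → q = q'

namespace ROWJFA
variable {α σ : Type}

def sig (A : ROWJFA α σ) (p : σ) : Set α := {a | ∃ q, (p, a, q) ∈ A.rules}

/-- `p x a y ↷ q y x` when `(p,a,q) ∈ R` and `x ∈ (Σ∖Σ_p)*`. -/
inductive Step (A : ROWJFA α σ) : σ × List α → σ × List α → Prop
  | jump {p q : σ} {a : α} (x y : List α) :
      (p, a, q) ∈ A.rules → (∀ b ∈ x, b ∉ A.sig p) →
      Step A (p, x ++ a :: y) (q, y ++ x)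

def language (A : ROWJFA α σ) : Set (List α) :=
  {w | ∃ qf ∈ A.accept, Relation.ReflTransGen (Step A) (A.start, w) (qf, [])}

end ROWJFA

def ROWJ {α : Type} (L : Set (List α)) : Prop :=
  ∃ (σ : Type) (_ : Finite σ) (A : ROWJFA α σ), A.language = L

/-! ### Left one-way jumping finite automata -/

structure LOWJFA (α σ : Type) where
  start : σ
  accept : Set σ
  /-- A rule `(q, a, p)` means: from state `p`, delete `a`, move to state `q`. -/
  rules : Set (σ × α × σ)
  det : ∀ p a q q', (q, a, p) ∈ rules → (q', a, p) ∈ rules → q = q'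

namespace LOWJFA
variable {α σ : Type}

def sig (A : LOWJFA α σ) (p : σ) : Set α := {a | ∃ q, (q, a, p) ∈ A.rules}

/-- `x y q ↶ y a x p` when `(q,a,p) ∈ R` and `x ∈ (Σ∖Σ_p)*`;
configurations are in `Σ* Q`. -/
inductive Step (A : LOWJFA α σ) : List α × σ → List α × σ → Prop
  | jump {p q : σ} {a : α} (x y : List α) :
      (q, a, p) ∈ A.rules → (∀ b ∈ x, b ∉ A.sig p) →
      Step A (y ++ a :: x, p) (x ++ y, q)

def language (A : LOWJFA α σ) : Set (List α) :=
  {w | ∃ qf ∈ A.accept, Relation.ReflTransGen (Step A) (w, A.start) ([], qf)}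

end LOWJFA

def LOWJ {α : Type} (L : Set (List α)) : Prop :=
  ∃ (σ : Type) (_ : Finite σ) (A : LOWJFA α σ), A.language = L

/-! ### Generalized right linear one-way jumping finite automata -/

structure GRLOWJFA (α σ : Type) where
  start : σ
  accept : Set σ
  rules : Set (σ × List α × σ)
  finite : rules.Finite
  ne : ∀ r ∈ rules, r.2.1 ≠ ([] : List α)
  det : ∀ p w q q', (p, w, q) ∈ rules → (p, w, q') ∈ rules → q = q'

namespace GRLOWJFA
variable {α σ : Type}

def sig (A : GRLOWJFA α σ) (p : σ) : Set (List α) := {w | ∃ q, (p, w, q) ∈ A.rules}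

/-- Configurations are triples `(t, p, v)` representing `t p v ∈ Σ* Q Σ*`. -/
inductive Step (A : GRLOWJFA α σ) :
    List α × σ × List α → List α × σ × List α → Prop
  /-- `t p u x v ↷ t u q v`. -/
  | rule {p q : σ} {x : List α} (t u v : List α) :
      (p, x, q) ∈ A.rules →
      NoSub (A.sig p) u →
      (¬ ∃ u₂ x₁ : List α, u₂ ≠ [] ∧ x₁ ≠ [] ∧ u₂ <:+ u ∧ x₁ <+: x ∧ u₂ ++ x₁ = x) →
      Step A (t, p, u ++ x ++ v) (t ++ u, q, v)
  /-- `x p y ↷ p x y`. -/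
  | ret {p : σ} (x y : List α) :
      x ≠ [] → NoSub (A.sig p) y →
      Step A (x, p, y) ([], p, x ++ y)

def language (A : GRLOWJFA α σ) : Set (List α) :=
  {w | ∃ qf ∈ A.accept, Relation.ReflTransGen (Step A) ([], A.start, w) ([], qf, [])}

end GRLOWJFA

def GRLOWJ {α : Type} (L : Set (List α)) : Prop :=
  ∃ (σ : Type) (_ : Finite σ) (A : GRLOWJFA α σ), A.language = L

/-! ### Generalized left linear one-way jumping finite automata -/

structure GLLOWJFA (α σ : Type) where
  start : σ
  accept : Set σ
  /-- A rule `(q, w, p)` means: from state `p`, delete `w`, move to state `q`. -/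
  rules : Set (σ × List α × σ)
  finite : rules.Finite
  ne : ∀ r ∈ rules, r.2.1 ≠ ([] : List α)
  det : ∀ p w q q', (q, w, p) ∈ rules → (q', w, p) ∈ rules → q = q'

namespace GLLOWJFA
variable {α σ : Type}

def sig (A : GLLOWJFA α σ) (p : σ) : Set (List α) := {w | ∃ q, (q, w, p) ∈ A.rules}

/-- Configurations are triples `(v, p, t)` representing `v p t ∈ Σ* Q Σ*`. -/
inductive Step (A : GLLOWJFA α σ) :
    List α × σ × List α → List α × σ × List α → Prop
  /-- `v q u t ↶ v x u p t`. -/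
  | rule {p q : σ} {x : List α} (t u v : List α) :
      (q, x, p) ∈ A.rules →
      NoSub (A.sig p) u →
      (¬ ∃ x₂ u₁ : List α, x₂ ≠ [] ∧ u₁ ≠ [] ∧ x₂ <:+ x ∧ u₁ <+: u ∧ x₂ ++ u₁ = x) →
      Step A (v ++ x ++ u, p, t) (v, q, u ++ t)
  /-- `y x p ↶ y p x`. -/
  | ret {p : σ} (x y : List α) :
      x ≠ [] → NoSub (A.sig p) y →
      Step A (y, p, x) (y ++ x, p, [])

def language (A : GLLOWJFA α σ) : Set (List α) :=
  {w | ∃ qf ∈ A.accept, Relation.ReflTransGen (Step A) (w, A.start, []) ([], qf, [])}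

end GLLOWJFA

def GLLOWJ {α : Type} (L : Set (List α)) : Prop :=
  ∃ (σ : Type) (_ : Finite σ) (A : GLLOWJFA α σ), A.language = L

inductive St1 : Type | q0 | q1
  deriving DecidableEq

/-- The GRLOWJFA of STATEMENT 1. -/
def A1 : GRLOWJFA AB St1 where
  start := St1.q0
  accept := {St1.q1}
  rules := {(St1.q0, [AB.a], St1.q0), (St1.q0, [AB.b, AB.b], St1.q1)}
  finite := (Set.finite_singleton _).insert _
  ne := by
    intro r hr
    simp only [Set.mem_insert_iff, Set.mem_singleton_iff] at hr
    rcases hr with rfl|rfl <;> simp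
  det := by
    intro p w q q' h h'
    simp only [Set.mem_insert_iff, Set.mem_singleton_iff] at h h'
    rcases h with h|h <;> rcases h' with h'|h' <;> simp_all

/-! ### Auxiliary development for `stmt_1` -/

namespace Stmt1Aux

open AB St1 GRLOWJFA Relation

lemma mem_rules_iff (p : St1) (w : List AB) (q : St1) :
    (p, w, q) ∈ A1.rules ↔
      (p = St1.q0 ∧ w = [AB.a] ∧ q = St1.q0) ∨
      (p = St1.q0 ∧ w = [AB.b, AB.b] ∧ q = St1.q1) := by
  simp [A1, Set.mem_insert_iff, Set.mem_singleton_iff, Prod.ext_iff]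

lemma memA : (St1.q0, [AB.a], St1.q0) ∈ A1.rules := Set.mem_insert _ _

lemma memBB : (St1.q0, [AB.b, AB.b], St1.q1) ∈ A1.rules :=
  Set.mem_insert_of_mem _ rfl

lemma sig_q0 (w : List AB) :
    w ∈ A1.sig St1.q0 ↔ w = [AB.a] ∨ w = [AB.b, AB.b] := by
  constructor
  · rintro ⟨q, hq⟩
    rcases (mem_rules_iff _ _ _).mp hq with ⟨-, rfl, -⟩ | ⟨-, rfl, -⟩
    · exact Or.inl rfl
    · exact Or.inr rfl
  · rintro (rfl | rfl)
    · exact ⟨St1.q0, memA⟩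
    · exact ⟨St1.q1, memBB⟩

lemma nosub_q1 (u : List AB) : NoSub (A1.sig St1.q1) u := by
  rintro ⟨w, ⟨q, hq⟩, -⟩
  rcases (mem_rules_iff _ _ _).mp hq with ⟨h, -, -⟩ | ⟨h, -, -⟩ <;> cases h

lemma nosub_q0 (u : List AB) :
    NoSub (A1.sig St1.q0) u ↔ u = [] ∨ u = [AB.b] := by
  constructor
  · intro h
    match u with
    | [] => exact Or.inl rfl
    | [c] =>
      cases c with
      | a => exact absurd ⟨[AB.a], (sig_q0 _).mpr (Or.inl rfl), List.infix_refl _⟩ h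
      | b => exact Or.inr rfl
    | c :: d :: r =>
      exfalso
      cases c with
      | a => exact h ⟨[AB.a], (sig_q0 _).mpr (Or.inl rfl), ⟨[], d :: r, rfl⟩⟩
      | b =>
        cases d with
        | a => exact h ⟨[AB.a], (sig_q0 _).mpr (Or.inl rfl), ⟨[AB.b], r, rfl⟩⟩
        | b => exact h ⟨[AB.b, AB.b], (sig_q0 _).mpr (Or.inr rfl), ⟨[], r, rfl⟩⟩
  · rintro (rfl | rfl) ⟨w, hw, hi⟩
    · rcases (sig_q0 _).mp hw with rfl | rfl <;> simp_all
    · rcases (sig_q0 _).mp hw with rfl | rfl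
      · have : AB.a ∈ [AB.b] := hi.subset (by simp)
        simp at this
      · have := hi.length_le
        simp at this

lemma noOverlapNil (x : List AB) :
    ¬ ∃ u₂ x₁ : List AB, u₂ ≠ [] ∧ x₁ ≠ [] ∧ u₂ <:+ ([] : List AB) ∧ x₁ <+: x ∧ u₂ ++ x₁ = x := by
  rintro ⟨u₂, x₁, h2, -, hs, -, -⟩
  exact h2 (List.suffix_nil.mp hs)

lemma noOverlapA (u : List AB) :
    ¬ ∃ u₂ x₁ : List AB, u₂ ≠ [] ∧ x₁ ≠ [] ∧ u₂ <:+ u ∧ x₁ <+: [AB.a] ∧ u₂ ++ x₁ = [AB.a] := by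
  rintro ⟨u₂, x₁, h2, h1, -, -, he⟩
  have hl := congrArg List.length he
  have h2' := List.length_pos_iff.mpr h2
  have h1' := List.length_pos_iff.mpr h1
  simp at hl
  omega

lemma stepA (t v : List AB) : A1.Step (t, St1.q0, AB.a :: v) (t, St1.q0, v) := by
  have h := GRLOWJFA.Step.rule (A := A1) t [] v memA
    ((nosub_q0 []).mpr (Or.inl rfl)) (noOverlapNil _)
  simpa using h

lemma stepBA (t v : List AB) :
    A1.Step (t, St1.q0, AB.b :: AB.a :: v) (t ++ [AB.b], St1.q0, v) := by
  have h := GRLOWJFA.Step.rule (A := A1) t [AB.b] v memA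
    ((nosub_q0 [AB.b]).mpr (Or.inr rfl)) (noOverlapA _)
  simpa using h

lemma stepBB (t v : List AB) :
    A1.Step (t, St1.q0, AB.b :: AB.b :: v) (t, St1.q1, v) := by
  have h := GRLOWJFA.Step.rule (A := A1) t [] v memBB
    ((nosub_q0 []).mpr (Or.inl rfl)) (noOverlapNil _)
  simpa using h

lemma runA (n : ℕ) (t v : List AB) :
    ReflTransGen A1.Step (t, St1.q0, List.replicate n AB.a ++ v) (t, St1.q0, v) := by
  induction n with
  | zero => exact ReflTransGen.refl
  | succ k ih =>
    refine ReflTransGen.head ?_ ih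
    simpa [List.replicate_succ] using stepA t (List.replicate k AB.a ++ v)

lemma fromTB (n : ℕ) :
    ReflTransGen A1.Step ([AB.b], St1.q0, AB.b :: List.replicate n AB.a) ([], St1.q1, []) := by
  have hbb : ReflTransGen A1.Step ([], St1.q0, [AB.b, AB.b]) ([], St1.q1, []) :=
    ReflTransGen.single (stepBB [] [])
  cases n with
  | zero =>
    refine ReflTransGen.head ?_ hbb
    exact GRLOWJFA.Step.ret [AB.b] [AB.b] (by simp) ((nosub_q0 _).mpr (Or.inr rfl))
  | succ k =>
    refine ReflTransGen.head (stepBA [AB.b] (List.replicate k AB.a)) ?_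
    refine ReflTransGen.trans (by simpa using runA k [AB.b, AB.b] []) ?_
    refine ReflTransGen.head ?_ hbb
    exact GRLOWJFA.Step.ret [AB.b, AB.b] [] (by simp) ((nosub_q0 _).mpr (Or.inl rfl))

lemma accept1 (n : ℕ) : (List.replicate n AB.a ++ [AB.b, AB.b]) ∈ A1.language := by
  refine ⟨St1.q1, rfl, ?_⟩
  exact ReflTransGen.trans (runA n [] [AB.b, AB.b]) (ReflTransGen.single (stepBB [] []))

lemma accept2 (l m n : ℕ) (hm : 1 ≤ m) :
    (List.replicate l AB.a ++ [AB.b] ++ List.replicate m AB.a ++ [AB.b] ++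
      List.replicate n AB.a) ∈ A1.language := by
  obtain ⟨m', rfl⟩ : ∃ m', m = m' + 1 := ⟨m - 1, by omega⟩
  refine ⟨St1.q1, rfl, ?_⟩
  have s1 : ReflTransGen A1.Step
      ([], St1.q0, List.replicate l AB.a ++ [AB.b] ++ List.replicate (m' + 1) AB.a ++ [AB.b] ++ List.replicate n AB.a)
      ([], St1.q0, [AB.b] ++ List.replicate (m' + 1) AB.a ++ [AB.b] ++ List.replicate n AB.a) := by
    have := runA l [] ([AB.b] ++ List.replicate (m' + 1) AB.a ++ [AB.b] ++ List.replicate n AB.a)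
    simpa [List.append_assoc] using this
  have s2 : A1.Step
      ([], St1.q0, [AB.b] ++ List.replicate (m' + 1) AB.a ++ [AB.b] ++ List.replicate n AB.a)
      ([AB.b], St1.q0, List.replicate m' AB.a ++ [AB.b] ++ List.replicate n AB.a) := by
    have := stepBA [] (List.replicate m' AB.a ++ [AB.b] ++ List.replicate n AB.a)
    simpa [List.replicate_succ, List.append_assoc] using this
  have s3 : ReflTransGen A1.Step
      ([AB.b], St1.q0, List.replicate m' AB.a ++ [AB.b] ++ List.replicate n AB.a)
      ([AB.b], St1.q0, [AB.b] ++ List.replicate n AB.a) := by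
    have := runA m' [AB.b] ([AB.b] ++ List.replicate n AB.a)
    simpa [List.append_assoc] using this
  have s4 : ReflTransGen A1.Step
      ([AB.b], St1.q0, [AB.b] ++ List.replicate n AB.a) ([], St1.q1, []) := by
    simpa using fromTB n
  exact ReflTransGen.trans s1 (ReflTransGen.head s2 (ReflTransGen.trans s3 s4))

/-! ### The invariant -/

def NoBB (w : List AB) : Prop := ¬ ([AB.b, AB.b] <:+: w)

def Gd (w : List AB) : Prop :=
  (∃ k, w = List.replicate k AB.a ++ [AB.b, AB.b]) ∨ (NoBB w ∧ w.count AB.b = 2)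

def Inv : List AB × St1 × List AB → Prop
  | (t, St1.q1, v) => t = [] ∧ v = []
  | (t, St1.q0, v) =>
      (t = [] ∧ ∃ k, v = List.replicate k AB.a ++ [AB.b, AB.b]) ∨
      (NoBB v ∧ Gd (t ++ List.replicate (v.count AB.b) AB.b))

lemma noBB_cons_a {v : List AB} (h : NoBB v) : NoBB (AB.a :: v) := by
  intro hi
  rcases List.infix_cons_iff.mp hi with hp | hi'
  · obtain ⟨s, hs⟩ := hp
    simp at hs
  · exact h hi'

lemma noBB_cons_ba {v : List AB} (h : NoBB v) : NoBB (AB.b :: AB.a :: v) := by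
  intro hi
  rcases List.infix_cons_iff.mp hi with hp | hi'
  · obtain ⟨s, hs⟩ := hp
    simp at hs
  · exact noBB_cons_a h hi'

lemma noBB_short {y : List AB} (h : y.length ≤ 1) : NoBB y := by
  intro hi
  have := hi.length_le
  simp at this
  omega

lemma noBB_suffix {x y : List AB} (h : NoBB (x ++ y)) : NoBB y := by
  intro hi
  exact h (hi.trans (List.suffix_append x y).isInfix)

lemma gd_replicate {j : ℕ} (h : Gd (List.replicate j AB.b)) : j = 2 := by
  rcases h with ⟨k, hk⟩ | ⟨-, hc⟩
  · have := congrArg (fun l => List.count AB.b l) hk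
    simpa [List.count_replicate] using this
  · simpa [List.count_replicate] using hc

lemma inv_step {c c' : List AB × St1 × List AB} (h : A1.Step c c') (hI : Inv c') : Inv c := by
  cases h with
  | @rule p q x t u v hr hns hcond =>
    rcases (mem_rules_iff _ _ _).mp hr with ⟨rfl, rfl, rfl⟩ | ⟨rfl, rfl, rfl⟩
    · -- rule (q0, [a], q0)
      have hu := (nosub_q0 u).mp hns
      have hI' : (t ++ u = [] ∧ ∃ k, v = List.replicate k AB.a ++ [AB.b, AB.b]) ∨
          (NoBB v ∧ Gd ((t ++ u) ++ List.replicate (v.count AB.b) AB.b)) := hI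
      rcases hI' with ⟨hte, k, rfl⟩ | ⟨hnb, hg⟩
      · obtain ⟨rfl, rfl⟩ := List.append_eq_nil_iff.mp hte
        refine Or.inl ⟨rfl, k + 1, ?_⟩
        simp [List.replicate_succ]
      · rcases hu with rfl | rfl
        · refine Or.inr ⟨?_, ?_⟩
          · show NoBB ([] ++ [AB.a] ++ v)
            exact noBB_cons_a hnb
          · show Gd (t ++ List.replicate ((([] ++ [AB.a] ++ v).count AB.b)) AB.b)
            simpa [List.count_cons] using hg
        · refine Or.inr ⟨?_, ?_⟩
          · show NoBB ([AB.b] ++ [AB.a] ++ v)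
            exact noBB_cons_ba hnb
          · show Gd (t ++ List.replicate ((([AB.b] ++ [AB.a] ++ v).count AB.b)) AB.b)
            have : ([AB.b] ++ [AB.a] ++ v).count AB.b = v.count AB.b + 1 := by
              simp [List.count_cons]
            rw [this]
            have h2 : t ++ List.replicate (v.count AB.b + 1) AB.b =
                (t ++ [AB.b]) ++ List.replicate (v.count AB.b) AB.b := by
              simp [List.replicate_succ, List.append_assoc]
            rw [h2]
            simpa [List.append_assoc] using hg
    · -- rule (q0, [b,b], q1)
      have hI' : t ++ u = [] ∧ v = [] := hI
      obtain ⟨hte, rfl⟩ := hI'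
      obtain ⟨rfl, rfl⟩ := List.append_eq_nil_iff.mp hte
      refine Or.inl ⟨rfl, 0, ?_⟩
      simp
  | @ret p x y hx hns =>
    cases p with
    | q1 =>
      have hI' : ([] : List AB) = [] ∧ x ++ y = [] := hI
      exact absurd (List.append_eq_nil_iff.mp hI'.2).1 hx
    | q0 =>
      have hy := (nosub_q0 y).mp hns
      have hI' : (([] : List AB) = [] ∧ ∃ k, x ++ y = List.replicate k AB.a ++ [AB.b, AB.b]) ∨
          (NoBB (x ++ y) ∧ Gd ([] ++ List.replicate ((x ++ y).count AB.b) AB.b)) := hI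
      rcases hI' with ⟨-, k, hk⟩ | ⟨hnb, hg⟩
      · refine Or.inr ⟨?_, ?_⟩
        · rcases hy with rfl | rfl
          · exact noBB_short (by simp)
          · exact noBB_short (by simp)
        · rcases hy with rfl | rfl
          · simp only [List.append_nil] at hk
            exact Or.inl ⟨k, by simpa using hk⟩
          · show Gd (x ++ List.replicate (([AB.b] : List AB).count AB.b) AB.b)
            have : ([AB.b] : List AB).count AB.b = 1 := by simp
            rw [this]
            exact Or.inl ⟨k, by simpa using hk⟩
      · have hj : (x ++ y).count AB.b = 2 := gd_replicate (by simpa using hg)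
        refine Or.inr ⟨noBB_suffix hnb, ?_⟩
        rcases hy with rfl | rfl
        · show Gd (x ++ List.replicate (([] : List AB).count AB.b) AB.b)
          simp only [List.count_nil, List.replicate_zero, List.append_nil]
          exact Or.inr ⟨by simpa using hnb, by simpa using hj⟩
        · show Gd (x ++ List.replicate (([AB.b] : List AB).count AB.b) AB.b)
          have h1 : ([AB.b] : List AB).count AB.b = 1 := by simp
          rw [h1]
          exact Or.inr ⟨by simpa using hnb, by simpa using hj⟩

lemma inv_of_rtg {c : List AB × St1 × List AB}
    (h : ReflTransGen A1.Step c ([], St1.q1, [])) : Inv c := by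
  induction h using ReflTransGen.head_induction_on with
  | refl => exact ⟨rfl, rfl⟩
  | head hstep _ ih => exact inv_step hstep ih

/-! ### Combinatorics of words with few `b`s -/

lemma all_a {w : List AB} (h : w.count AB.b = 0) : ∃ n, w = List.replicate n AB.a := by
  refine ⟨w.length, List.eq_replicate_iff.mpr ⟨rfl, ?_⟩⟩
  intro x hx
  cases x with
  | a => rfl
  | b => exact absurd hx (List.count_eq_zero.mp h)

lemma one_b {w : List AB} (h : w.count AB.b = 1) :
    ∃ m n, w = List.replicate m AB.a ++ AB.b :: List.replicate n AB.a := by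
  have hb : AB.b ∈ w := by
    rw [← List.count_pos_iff]; omega
  obtain ⟨s, t, rfl⟩ := List.append_of_mem hb
  simp only [List.count_append, List.count_cons_self] at h
  obtain ⟨m, rfl⟩ := all_a (w := s) (by omega)
  obtain ⟨n, rfl⟩ := all_a (w := t) (by omega)
  exact ⟨m, n, rfl⟩

lemma two_b {w : List AB} (h : w.count AB.b = 2) :
    ∃ l m n, w = List.replicate l AB.a ++
      AB.b :: (List.replicate m AB.a ++ AB.b :: List.replicate n AB.a) := by
  have hb : AB.b ∈ w := by
    rw [← List.count_pos_iff]; omega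
  obtain ⟨s, t, rfl⟩ := List.append_of_mem hb
  simp only [List.count_append, List.count_cons_self] at h
  rcases Nat.lt_or_ge (s.count AB.b) 1 with hs | hs
  · obtain ⟨l, rfl⟩ := all_a (w := s) (by omega)
    obtain ⟨m, n, rfl⟩ := one_b (w := t) (by omega)
    exact ⟨l, m, n, rfl⟩
  · obtain ⟨l, m, rfl⟩ := one_b (w := s) (by omega)
    obtain ⟨n, rfl⟩ := all_a (w := t) (by omega)
    exact ⟨l, m, n, by simp [List.append_assoc]⟩

end Stmt1Aux

theorem stmt_1 :
    A1.language =
      {w : List AB | ∃ n : ℕ, w = List.replicate n AB.a ++ [AB.b, AB.b]} ∪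
      {w : List AB | ∃ l m n : ℕ, 1 ≤ m ∧
        w = List.replicate l AB.a ++ [AB.b] ++ List.replicate m AB.a ++ [AB.b] ++
            List.replicate n AB.a} := by
  ext w
  constructor
  · rintro ⟨qf, hqf, hrt⟩
    have hqf' : qf = St1.q1 := hqf
    subst hqf'
    have hI := Stmt1Aux.inv_of_rtg hrt
    have hI' : (([] : List AB) = [] ∧ ∃ k, w = List.replicate k AB.a ++ [AB.b, AB.b]) ∨
        (Stmt1Aux.NoBB w ∧ Stmt1Aux.Gd ([] ++ List.replicate (w.count AB.b) AB.b)) := hI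
    rcases hI' with ⟨-, k, rfl⟩ | ⟨hnb, hg⟩
    · exact Or.inl ⟨k, rfl⟩
    · have hj : w.count AB.b = 2 := Stmt1Aux.gd_replicate (by simpa using hg)
      obtain ⟨l, m, n, rfl⟩ := Stmt1Aux.two_b hj
      have hm : m ≠ 0 := by
        rintro rfl
        exact hnb ⟨List.replicate l AB.a, List.replicate n AB.a, by simp⟩
      exact Or.inr ⟨l, m, n, by omega, by simp [List.append_assoc]⟩
  · rintro (⟨n, rfl⟩ | ⟨l, m, n, hm, rfl⟩)
    · exact Stmt1Aux.accept1 n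
    · exact Stmt1Aux.accept2 l m n hm
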